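/- arXiv:1503.03359 — 4 statements merged into one kernel-verified Lean document; each statement's English description precedes it below -/
import Mathlib

section
/- For every erasure probability ε ∈ [0,1), the function f_ε(p) = H_b(p)/(p + 1/(1-ε)) is concave on the interval [0,1]. -/
/-- Binary entropy function (base 2), with the convention `0 * log 0 = 0`
(automatic since `Real.logb 2 0 = 0`). -/
noncomputable def Hb (p : ℝ) : ℝ := -p * Real.logb 2 p - (1 - p) * Real.logb 2 (1 - p)

/-!
Since `Hb = binEntropy / log 2`, it suffices to treat `h = binEntropy` and `c = 1 / (1 - ε) ≥ 1`.
For `g = h / (x + c)` one has `(x + c)³ g'' = N := (x + c)² h'' - 2 (x + c) h' + 2 h`, and in `N'`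
everything cancels except `(x + c)² h'''`. As `h''' = (1 - 2x) / (x (1 - x))²`, `N` is maximal at
`x = 1/2`, where it equals `2 log 2 - 4 (c + 1/2)²`; this is negative as soon as `c ≥ 1`.
-/

open Real Set

section DivAddConst

variable {f f' f'' f''' : ℝ → ℝ} {a b c x : ℝ}

def deriv2DivAddConstNumerator (f f' f'' : ℝ → ℝ) (c x : ℝ) : ℝ :=
  (x + c) ^ 2 * f'' x - 2 * (x + c) * f' x + 2 * f x

lemma hasDerivAt_div_add_const (hf : HasDerivAt f (f' x) x) (hx : x + c ≠ 0) :
    HasDerivAt (fun y => f y / (y + c)) (f' x / (x + c) - f x / (x + c) ^ 2) x := by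
  refine (hf.fun_div ((hasDerivAt_id' x).add_const c) hx).congr_deriv ?_
  field_simp

lemma hasDerivAt_deriv_div_add_const (hf : HasDerivAt f (f' x) x)
    (hf' : HasDerivAt f' (f'' x) x) (hx : x + c ≠ 0) :
    HasDerivAt (fun y => f' y / (y + c) - f y / (y + c) ^ 2)
      (deriv2DivAddConstNumerator f f' f'' c x / (x + c) ^ 3) x := by
  have hshift : HasDerivAt (fun y => y + c) 1 x := (hasDerivAt_id' x).add_const c
  refine ((hf'.fun_div hshift hx).fun_sub
    (hf.fun_div (hshift.fun_pow 2) (pow_ne_zero 2 hx))).congr_deriv ?_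
  simp only [deriv2DivAddConstNumerator]
  field_simp
  ring

lemma hasDerivAt_deriv2DivAddConstNumerator (hf : HasDerivAt f (f' x) x)
    (hf' : HasDerivAt f' (f'' x) x) (hf'' : HasDerivAt f'' (f''' x) x) :
    HasDerivAt (deriv2DivAddConstNumerator f f' f'' c) ((x + c) ^ 2 * f''' x) x := by
  have hshift : HasDerivAt (fun y => y + c) 1 x := (hasDerivAt_id' x).add_const c
  refine ((((hshift.fun_pow 2).fun_mul hf'').fun_sub ((hshift.const_mul 2).fun_mul hf')).fun_add
    (hf.const_mul 2)).congr_deriv ?_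
  ring

lemma concaveOn_div_add_const (hc : 0 < a + c) (hf : ContinuousOn f (Icc a b))
    (hf' : ∀ x ∈ Ioo a b, HasDerivAt f (f' x) x)
    (hf'' : ∀ x ∈ Ioo a b, HasDerivAt f' (f'' x) x)
    (hN : ∀ x ∈ Ioo a b, deriv2DivAddConstNumerator f f' f'' c x ≤ 0) :
    ConcaveOn ℝ (Icc a b) fun x => f x / (x + c) := by
  have hpos : ∀ x ∈ Icc a b, 0 < x + c := fun x hx => by linarith [hx.1]
  refine concaveOn_of_hasDerivWithinAt2_nonpos (convex_Icc a b)
    (f' := fun x => f' x / (x + c) - f x / (x + c) ^ 2)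
    (f'' := fun x => deriv2DivAddConstNumerator f f' f'' c x / (x + c) ^ 3)
    (hf.div (by fun_prop) fun x hx => (hpos x hx).ne') ?_ ?_ ?_ <;> rw [interior_Icc]
  · exact fun x hx =>
      (hasDerivAt_div_add_const (hf' x hx) (hpos x (Ioo_subset_Icc_self hx)).ne').hasDerivWithinAt
  · exact fun x hx => (hasDerivAt_deriv_div_add_const (hf' x hx) (hf'' x hx)
      (hpos x (Ioo_subset_Icc_self hx)).ne').hasDerivWithinAt
  · exact fun x hx => div_nonpos_of_nonpos_of_nonneg (hN x hx)
      (pow_pos (hpos x (Ioo_subset_Icc_self hx)) 3).le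

end DivAddConst

section BinEntropy

variable {c p : ℝ}

lemma hasDerivAt_log_one_sub_sub_log (hp₀ : p ≠ 0) (hp₁ : p ≠ 1) :
    HasDerivAt (fun q => log (1 - q) - log q) (-(p * (1 - p))⁻¹) p := by
  have h1p : 1 - p ≠ 0 := sub_ne_zero.2 hp₁.symm
  refine ((((hasDerivAt_id' p).const_sub 1).log h1p).fun_sub
    (hasDerivAt_log hp₀)).congr_deriv ?_
  field_simp
  ring

lemma hasDerivAt_neg_inv_mul_one_sub (hp₀ : p ≠ 0) (hp₁ : p ≠ 1) :
    HasDerivAt (fun q => -(q * (1 - q))⁻¹) ((1 - 2 * p) / (p * (1 - p)) ^ 2) p := by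
  have h1p : 1 - p ≠ 0 := sub_ne_zero.2 hp₁.symm
  refine (((hasDerivAt_id' p).fun_mul ((hasDerivAt_id' p).const_sub 1)).fun_inv
    (mul_ne_zero hp₀ h1p)).fun_neg.congr_deriv ?_
  field_simp
  ring

lemma deriv2DivAddConstNumerator_binEntropy_neg (hc : log 2 < 2 * (c + 2⁻¹) ^ 2)
    (hp : p ∈ Ioo 0 1) :
    deriv2DivAddConstNumerator binEntropy (fun q => log (1 - q) - log q)
      (fun q => -(q * (1 - q))⁻¹) c p < 0 := by
  set N := deriv2DivAddConstNumerator binEntropy (fun q => log (1 - q) - log q)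
      (fun q => -(q * (1 - q))⁻¹) c
  have hN : ∀ q ∈ Ioo (0 : ℝ) 1,
      HasDerivAt N ((q + c) ^ 2 * ((1 - 2 * q) / (q * (1 - q)) ^ 2)) q := fun q hq =>
    have hq₀ : q ≠ 0 := hq.1.ne'
    have hq₁ : q ≠ 1 := hq.2.ne
    hasDerivAt_deriv2DivAddConstNumerator (f''' := fun q => (1 - 2 * q) / (q * (1 - q)) ^ 2)
      (hasDerivAt_binEntropy hq₀ hq₁)
      (hasDerivAt_log_one_sub_sub_log hq₀ hq₁) (hasDerivAt_neg_inv_mul_one_sub hq₀ hq₁)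
  have hmax : IsMaxOn N (Ioo 0 1) 2⁻¹ := by
    refine isMaxOn_Ioo_of_deriv (hN _ (by norm_num)).continuousAt
      (fun q hq => (hN q ⟨hq.1, by linarith [hq.2]⟩).differentiableAt.differentiableWithinAt)
      (fun q hq => (hN q ⟨by linarith [hq.1], hq.2⟩).differentiableAt.differentiableWithinAt)
      (fun q hq => ?_) (fun q hq => ?_)
    · rw [(hN q ⟨hq.1, by linarith [hq.2]⟩).deriv]
      exact mul_nonneg (sq_nonneg _) (div_nonneg (by linarith [hq.2]) (sq_nonneg _))
    · rw [(hN q ⟨by linarith [hq.1], hq.2⟩).deriv]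
      exact mul_nonpos_of_nonneg_of_nonpos (sq_nonneg _)
        (div_nonpos_of_nonpos_of_nonneg (by linarith [hq.1]) (sq_nonneg _))
  have hhalf : N 2⁻¹ = 2 * log 2 - 4 * (c + 2⁻¹) ^ 2 := by
    simp only [N, deriv2DivAddConstNumerator, binEntropy_two_inv]
    norm_num
    ring
  calc N p ≤ N 2⁻¹ := hmax hp
    _ < 0 := by linarith

lemma concaveOn_binEntropy_div_add_const (hc₀ : 0 < c) (hc : log 2 < 2 * (c + 2⁻¹) ^ 2) :
    ConcaveOn ℝ (Icc 0 1) fun p => binEntropy p / (p + c) :=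
  concaveOn_div_add_const (by linarith) binEntropy_continuous.continuousOn
    (fun p hp => hasDerivAt_binEntropy hp.1.ne' hp.2.ne)
    (fun p hp => hasDerivAt_log_one_sub_sub_log hp.1.ne' hp.2.ne)
    (fun p hp => (deriv2DivAddConstNumerator_binEntropy_neg hc hp).le)

end BinEntropy

lemma Hb_eq_binEntropy_div_log_two (p : ℝ) : Hb p = binEntropy p / log 2 := by
  simp only [Hb, logb, binEntropy, log_inv]
  ring

/-- For every erasure probability ε ∈ [0,1), the function
`f_ε(p) = H_b(p)/(p + 1/(1-ε))` is concave on [0,1]. -/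
theorem concavity_of_capacity_objective (ε : ℝ) (hε0 : 0 ≤ ε) (hε1 : ε < 1) :
    ConcaveOn ℝ (Set.Icc (0 : ℝ) 1) (fun p => Hb p / (p + 1 / (1 - ε))) := by
  have hc : 1 ≤ 1 / (1 - ε) := by rw [le_div_iff₀ (by linarith)]; linarith
  have hlog : log 2 < 2 * (1 / (1 - ε) + 2⁻¹) ^ 2 := by
    nlinarith [log_two_lt_d9]
  have hHb : (fun p => Hb p / (p + 1 / (1 - ε))) =
      fun p => (log 2)⁻¹ • (binEntropy p / (p + 1 / (1 - ε))) := by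
    ext p
    rw [Hb_eq_binEntropy_div_log_two, smul_eq_mul]
    ring
  rw [hHb]
  exact (concaveOn_binEntropy_div_add_const (by linarith) hlog).smul
    (inv_nonneg.2 (log_pos one_lt_two).le)
end

section
/- For every erasure probability ε ∈ [0,1), the function f_ε(p) = H_b(p)/(p + 1/(1-ε)) has a unique maximizer p_ε on [0,1]; this maximizer lies in the open interval (0, 1/2) and is the unique real solution in (0,1) of the equation p^{1/(1-ε)} = (1-p)^{1 + 1/(1-ε)}. -/
lemma Hb_eq (p : ℝ) : Hb p = Real.binEntropy p / Real.log 2 := by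
  unfold Hb Real.binEntropy Real.logb
  rw [Real.log_inv, Real.log_inv]
  ring

lemma Hb_cont : Continuous Hb := by
  simp only [funext Hb_eq]
  exact Real.binEntropy_continuous.div_const _

lemma G_strictMono (c : ℝ) (hc : 0 < c) :
    StrictMonoOn (fun q : ℝ => c * Real.log q - (1 + c) * Real.log (1 - q)) (Set.Ioo 0 1) := by
  intro x hx y hy hxy
  have h1 : c * Real.log x < c * Real.log y :=
    mul_lt_mul_of_pos_left (Real.log_lt_log hx.1 hxy) hc
  have h2 : Real.log (1 - y) < Real.log (1 - x) :=
    Real.log_lt_log (by linarith [hy.2]) (by linarith)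
  have h3 : (1 + c) * Real.log (1 - y) < (1 + c) * Real.log (1 - x) :=
    mul_lt_mul_of_pos_left h2 (by linarith)
  dsimp only
  linarith

/-- For every ε ∈ [0,1), the function `f_ε(p) = H_b(p)/(p + 1/(1-ε))` has a unique
maximizer `p_ε` on [0,1]; it lies in the open interval (0, 1/2) and is the unique real
solution in (0,1) of the equation `p^(1/(1-ε)) = (1-p)^(1 + 1/(1-ε))`. -/
theorem unique_maximizer (ε : ℝ) (hε0 : 0 ≤ ε) (hε1 : ε < 1) :
    ∃ p : ℝ, p ∈ Set.Icc (0 : ℝ) 1 ∧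
      (∀ q ∈ Set.Icc (0 : ℝ) 1, Hb q / (q + 1 / (1 - ε)) ≤ Hb p / (p + 1 / (1 - ε))) ∧
      (∀ q ∈ Set.Icc (0 : ℝ) 1,
        (∀ r ∈ Set.Icc (0 : ℝ) 1, Hb r / (r + 1 / (1 - ε)) ≤ Hb q / (q + 1 / (1 - ε))) →
        q = p) ∧
      p ∈ Set.Ioo (0 : ℝ) (1 / 2) ∧
      p ^ (1 / (1 - ε)) = (1 - p) ^ (1 + 1 / (1 - ε)) ∧
      (∀ q ∈ Set.Ioo (0 : ℝ) 1,
        q ^ (1 / (1 - ε)) = (1 - q) ^ (1 + 1 / (1 - ε)) → q = p) := by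
  have h1ε : 0 < 1 - ε := by linarith
  set c : ℝ := 1 / (1 - ε) with hcdef
  have hc0 : 0 < c := by positivity
  have hc1 : 1 ≤ c := by
    rw [hcdef]
    rw [le_div_iff₀ h1ε]
    linarith
  set G : ℝ → ℝ := fun q => c * Real.log q - (1 + c) * Real.log (1 - q) with hGdef
  have hGmono := G_strictMono c hc0
  have hlog2 : (0 : ℝ) < Real.log 2 := Real.log_pos (by norm_num)
  -- root of G
  set p₀ : ℝ := Real.exp (-(((1 + c) * Real.log 2 + 1) / c)) with hp₀def
  have hp₀pos : 0 < p₀ := Real.exp_pos _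
  have hp₀half : p₀ < 1 / 2 := by
    rw [hp₀def]
    have : (1:ℝ)/2 = Real.exp (Real.log (1/2)) := (Real.exp_log (by norm_num)).symm
    rw [this]
    apply Real.exp_lt_exp.mpr
    rw [Real.log_div (by norm_num) (by norm_num), Real.log_one]
    have h : Real.log 2 < ((1 + c) * Real.log 2 + 1) / c := by
      rw [lt_div_iff₀ hc0]; nlinarith
    linarith
  have hG₀ : G p₀ < 0 := by
    have hlogp₀ : Real.log p₀ = -(((1 + c) * Real.log 2 + 1) / c) := Real.log_exp _
    have h1 : Real.log (1 - p₀) ≥ Real.log (1/2) := by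
      apply Real.log_le_log (by norm_num)
      linarith
    rw [Real.log_div (by norm_num) (by norm_num), Real.log_one] at h1
    have h2 : c * Real.log p₀ = -((1 + c) * Real.log 2 + 1) := by
      rw [hlogp₀]; field_simp
    have h3 : (1 + c) * Real.log (1 - p₀) ≥ (1 + c) * (0 - Real.log 2) :=
      mul_le_mul_of_nonneg_left h1 (by linarith)
    simp only [hGdef]
    nlinarith
  have hGhalf : G (1/2) = Real.log 2 := by
    simp only [hGdef]
    have : (1:ℝ) - 1/2 = 1/2 := by norm_num
    rw [this, Real.log_div (by norm_num) (by norm_num), Real.log_one]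
    ring
  have hGcont : ContinuousOn G (Set.Icc p₀ (1/2)) := by
    intro q hq
    have hq0 : (0:ℝ) < q := lt_of_lt_of_le hp₀pos hq.1
    have hq1 : q < 1 := lt_of_le_of_lt hq.2 (by norm_num)
    apply ContinuousAt.continuousWithinAt
    exact (continuousAt_const.mul (Real.continuousAt_log hq0.ne')).sub
      (continuousAt_const.mul ((Real.continuousAt_log (by linarith)).comp
        (continuousAt_const.sub continuousAt_id)))
  obtain ⟨p, hpmem, hGp⟩ : ∃ p ∈ Set.Icc p₀ (1/2), G p = 0 := by
    have := intermediate_value_Icc hp₀half.le hGcont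
    have h0 : (0:ℝ) ∈ Set.Icc (G p₀) (G (1/2)) := ⟨hG₀.le, by rw [hGhalf]; exact hlog2.le⟩
    obtain ⟨p, hp, hp0⟩ := this h0
    exact ⟨p, hp, hp0⟩
  have hppos : 0 < p := lt_of_lt_of_le hp₀pos hpmem.1
  have hphalf : p < 1/2 := by
    rcases lt_or_eq_of_le hpmem.2 with h | h
    · exact h
    · exfalso; rw [h, hGhalf] at hGp; linarith
  have hpIoo : p ∈ Set.Ioo (0:ℝ) 1 := ⟨hppos, by linarith⟩
  -- uniqueness of the root
  have hGuniq : ∀ q ∈ Set.Ioo (0:ℝ) 1, G q = 0 → q = p :=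
    fun q hq hq0 => hGmono.injOn hq hpIoo (show G q = G p by rw [hq0, hGp])
  -- equation ↔ G = 0
  have heq_of_G : ∀ q ∈ Set.Ioo (0:ℝ) 1, G q = 0 → q ^ c = (1 - q) ^ (1 + c) := by
    intro q hq hGq
    rw [Real.rpow_def_of_pos hq.1, Real.rpow_def_of_pos (by linarith [hq.2] : (0:ℝ) < 1 - q)]
    congr 1
    simp only [hGdef] at hGq
    linarith [hGq]
  have hG_of_eq : ∀ q ∈ Set.Ioo (0:ℝ) 1, q ^ c = (1 - q) ^ (1 + c) → G q = 0 := by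
    intro q hq heq
    have h1q : (0:ℝ) < 1 - q := by linarith [hq.2]
    have := congrArg Real.log heq
    rw [Real.log_rpow hq.1, Real.log_rpow h1q] at this
    simp only [hGdef]
    linarith
  -- the objective function
  set f : ℝ → ℝ := fun q => Hb q / (q + c) with hfdef
  have hdenom : ∀ q : ℝ, 0 ≤ q → q + c ≠ 0 := fun q hq => by positivity
  have hfc : ContinuousOn f (Set.Icc 0 1) := by
    apply ContinuousOn.div Hb_cont.continuousOn (by fun_prop)
    intro q hq
    exact hdenom q hq.1
  have hfhalf : 0 < f (1/2) := by
    have : Hb (1/2) = 1 := by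
      rw [Hb_eq]
      have : (1:ℝ)/2 = 2⁻¹ := by norm_num
      rw [this, Real.binEntropy_two_inv, div_self hlog2.ne']
    simp only [hfdef, this]
    positivity
  have hhalfmem : (1:ℝ)/2 ∈ Set.Icc (0:ℝ) 1 := by norm_num
  -- any maximizer equals p
  have key : ∀ q ∈ Set.Icc (0:ℝ) 1, (∀ r ∈ Set.Icc (0:ℝ) 1, f r ≤ f q) → q = p := by
    intro q hq hmax
    have hfq : 0 < f q := lt_of_lt_of_le hfhalf (hmax _ hhalfmem)
    have hq0 : q ≠ 0 := by
      rintro rfl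
      have : Hb 0 = 0 := by unfold Hb; simp
      simp only [hfdef, this, zero_div] at hfq
      exact lt_irrefl _ hfq
    have hq1 : q ≠ 1 := by
      rintro rfl
      have : Hb 1 = 0 := by unfold Hb; simp
      simp only [hfdef, this, zero_div] at hfq
      exact lt_irrefl _ hfq
    have hqIoo : q ∈ Set.Ioo (0:ℝ) 1 :=
      ⟨lt_of_le_of_ne hq.1 (Ne.symm hq0), lt_of_le_of_ne hq.2 hq1⟩
    have hlocal : IsLocalMax f q :=
      (isMaxOn_iff.mpr hmax).isLocalMax (Icc_mem_nhds hqIoo.1 hqIoo.2)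
    -- derivative of f at q
    have hHb : HasDerivAt Hb ((Real.log (1 - q) - Real.log q) / Real.log 2) q := by
      rw [funext Hb_eq]
      exact (Real.hasDerivAt_binEntropy hq0 hq1).div_const _
    have hden : HasDerivAt (fun x : ℝ => x + c) 1 q := (hasDerivAt_id q).add_const c
    have hqc : q + c ≠ 0 := hdenom q hq.1
    have hD : HasDerivAt f
        (((Real.log (1 - q) - Real.log q) / Real.log 2 * (q + c) - Hb q * 1) / (q + c) ^ 2) q :=
      hHb.div hden hqc
    have hD0 := hlocal.hasDerivAt_eq_zero hD
    have hnum : (Real.log (1 - q) - Real.log q) * (q + c) - Real.log 2 * Hb q = 0 := by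
      rcases div_eq_zero_iff.mp hD0 with h | h
      · have h' := congrArg (fun x => x * Real.log 2) h
        field_simp [hlog2.ne'] at h'
        linarith [h']
      · exact absurd h (pow_ne_zero 2 hqc)
    have hGq : G q = 0 := by
      have h1 : Real.log 2 * Hb q = Real.binEntropy q := by
        rw [Hb_eq]; field_simp
      have h2 : Real.binEntropy q = -(q * Real.log q) - (1 - q) * Real.log (1 - q) := by
        unfold Real.binEntropy
        rw [Real.log_inv, Real.log_inv]
        ring
      simp only [hGdef]
      nlinarith [hnum, h1, h2]
    exact hGuniq q hqIoo hGq
  -- existence of maximizer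
  obtain ⟨m, hm, hmax⟩ := isCompact_Icc.exists_isMaxOn (Set.nonempty_Icc.mpr (by norm_num)) hfc
  have hmax' : ∀ r ∈ Set.Icc (0:ℝ) 1, f r ≤ f m := fun r hr => hmax hr
  have hmp : m = p := key m hm hmax'
  refine ⟨p, ⟨hppos.le, by linarith⟩, ?_, ?_, ⟨hppos, hphalf⟩, heq_of_G p hpIoo hGp,
    fun q hq heq => hGuniq q hq (hG_of_eq q hq heq)⟩
  · intro q hq
    have := hmax' q hq
    rw [hmp] at this
    exact this
  · intro q hq hqmax
    exact key q hq hqmax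
end

section
/- Let ε ∈ [0,1), let ρ*_ε = max over p ∈ [0,1/2] of H_b(p)/(p + 1/(1-ε)), and let p_ε be the corresponding maximizer. Then the function f(z) = (1-ε)·H_b(z) - z·(1-ε)·ρ*_ε is concave on [0,1], and it attains its maximum over [0,1] at z = p_ε. -/
lemma Hb_one_sub (p : ℝ) : Hb (1 - p) = Hb p := by
  rw [Hb_eq, Hb_eq, Real.binEntropy_one_sub]

lemma Hb_nonneg {p : ℝ} (h0 : 0 ≤ p) (h1 : p ≤ 1) : 0 ≤ Hb p := by
  rw [Hb_eq]
  exact div_nonneg (Real.binEntropy_nonneg h0 h1) (Real.log_nonneg one_le_two)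

lemma concaveOn_Hb : ConcaveOn ℝ (Set.Icc (0:ℝ) 1) Hb := by
  have h : Hb = fun p => (Real.log 2)⁻¹ • Real.binEntropy p := by
    funext p; rw [Hb_eq]; simp [div_eq_inv_mul]
  rw [h]
  exact Real.strictConcave_binEntropy.concaveOn.smul (by positivity)

/-- Let ε ∈ [0,1), let `ρ` be the maximum of `H_b(p)/(p + 1/(1-ε))` over p ∈ [0,1/2],
attained at `pε`. Then `f(z) = (1-ε)·H_b(z) - z·(1-ε)·ρ` is concave on [0,1] and attains
its maximum over [0,1] at `z = pε`. -/
theorem concave_and_max_at_pe (ε ρ pε : ℝ) (hε0 : 0 ≤ ε) (hε1 : ε < 1)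
    (hpε : pε ∈ Set.Icc (0 : ℝ) (1 / 2))
    (hmax : ∀ q ∈ Set.Icc (0 : ℝ) (1 / 2),
      Hb q / (q + 1 / (1 - ε)) ≤ Hb pε / (pε + 1 / (1 - ε)))
    (hρ : ρ = Hb pε / (pε + 1 / (1 - ε))) :
    ConcaveOn ℝ (Set.Icc (0 : ℝ) 1) (fun z => (1 - ε) * Hb z - z * (1 - ε) * ρ) ∧
    ∀ z ∈ Set.Icc (0 : ℝ) 1,
      (1 - ε) * Hb z - z * (1 - ε) * ρ ≤ (1 - ε) * Hb pε - pε * (1 - ε) * ρ := by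
  have hεpos : (0:ℝ) < 1 - ε := by linarith
  have hc : (0:ℝ) < 1 / (1 - ε) := by positivity
  obtain ⟨hp0, hp2⟩ := hpε
  have hden : (0:ℝ) < pε + 1 / (1 - ε) := by linarith
  have hρ0 : 0 ≤ ρ := by
    rw [hρ]; exact div_nonneg (Hb_nonneg hp0 (by linarith)) hden.le
  constructor
  · have h1 : ConcaveOn ℝ (Set.Icc (0:ℝ) 1) (fun z => (1 - ε) * Hb z) := by
      have := concaveOn_Hb.smul hεpos.le
      simpa [smul_eq_mul] using this
    have h2 : ConvexOn ℝ (Set.Icc (0:ℝ) 1) (fun z => z * (1 - ε) * ρ) := by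
      have h : (fun z : ℝ => z * (1 - ε) * ρ) = fun z => ((1 - ε) * ρ) • z := by
        funext z; simp [smul_eq_mul]; ring
      rw [h]
      exact (convexOn_id (convex_Icc 0 1)).smul (by positivity)
    exact h1.sub h2
  · intro z ⟨hz0, hz1⟩
    -- key: Hb z - z * ρ ≤ ρ * (1/(1-ε)) for all z ∈ [0,1]
    have key : ∀ q ∈ Set.Icc (0:ℝ) (1/2), Hb q - q * ρ ≤ ρ * (1 / (1 - ε)) := by
      intro q ⟨hq0, hq2⟩
      have hd : (0:ℝ) < q + 1 / (1 - ε) := by linarith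
      have := hmax q ⟨hq0, hq2⟩
      rw [div_le_iff₀ hd, ← hρ] at this
      nlinarith
    have hpe_eq : Hb pε - pε * ρ = ρ * (1 / (1 - ε)) := by
      rw [hρ]; field_simp; ring
    have hz : Hb z - z * ρ ≤ ρ * (1 / (1 - ε)) := by
      rcases le_or_gt z (1/2) with h | h
      · exact key z ⟨hz0, h⟩
      · have h1 : Hb (1 - z) - (1 - z) * ρ ≤ ρ * (1 / (1 - ε)) :=
          key (1 - z) ⟨by linarith, by linarith⟩
        rw [Hb_one_sub] at h1
        nlinarith
    nlinarith [hz, hpe_eq]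
end

section
/- Let ε ∈ [0,1), let ρ*_ε = max over p ∈ [0,1/2] of H_b(p)/(p + 1/(1-ε)), and let p_ε be the corresponding maximizer. Then for every δ with 1 - p_ε ≤ δ ≤ 1, the inequality (1-ε)·(1+ε)·H_b(δ) + (1-ε)²·(1-δ)·ρ*_ε ≤ 2·ρ*_ε holds. -/
/-- Let ε ∈ [0,1) and let `ρ` be the maximum of `H_b(p)/(p + 1/(1-ε))` over p ∈ [0,1/2],
attained at `pε`. Then for every δ with `1 - pε ≤ δ ≤ 1`,
`(1-ε)(1+ε)·H_b(δ) + (1-ε)²·(1-δ)·ρ ≤ 2·ρ`. -/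
theorem third_case_bound (ε ρ pε : ℝ) (hε0 : 0 ≤ ε) (hε1 : ε < 1)
    (hpε : pε ∈ Set.Icc (0 : ℝ) (1 / 2))
    (hmax : ∀ q ∈ Set.Icc (0 : ℝ) (1 / 2),
      Hb q / (q + 1 / (1 - ε)) ≤ Hb pε / (pε + 1 / (1 - ε)))
    (hρ : ρ = Hb pε / (pε + 1 / (1 - ε))) :
    ∀ δ : ℝ, 1 - pε ≤ δ → δ ≤ 1 →
      (1 - ε) * (1 + ε) * Hb δ + (1 - ε) ^ 2 * (1 - δ) * ρ ≤ 2 * ρ := by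
  intro δ hδ1 hδ2
  obtain ⟨hp0, hp2⟩ := hpε
  set q : ℝ := 1 - δ with hq
  have hq0 : 0 ≤ q := by simp [hq]; linarith
  have hqle : q ≤ pε := by simp [hq]; linarith
  have hq2 : q ≤ 1 / 2 := le_trans hqle hp2
  have hc : (0:ℝ) < 1 - ε := by linarith
  have hcpos : (0:ℝ) < 1 / (1 - ε) := by positivity
  have hden : 0 < q + 1 / (1 - ε) := by linarith
  have hsym : Hb δ = Hb q := by
    have h1 : δ = 1 - q := by simp [hq]
    have h2 : (1:ℝ) - (1 - q) = q := by ring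
    rw [h1]; unfold Hb; rw [h2]; ring
  -- ρ is nonnegative
  have hHbpε : 0 ≤ Hb pε := by
    have hl1 : Real.logb 2 pε ≤ 0 := Real.logb_nonpos one_lt_two hp0 (by linarith)
    have hl2 : Real.logb 2 (1 - pε) ≤ 0 :=
      Real.logb_nonpos one_lt_two (by linarith) (by linarith)
    have := mul_nonneg hp0 (neg_nonneg.mpr hl1)
    have := mul_nonneg (show (0:ℝ) ≤ 1 - pε by linarith) (neg_nonneg.mpr hl2)
    unfold Hb; nlinarith
  have hdenp : 0 < pε + 1 / (1 - ε) := by linarith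
  have hρ0 : 0 ≤ ρ := by rw [hρ]; exact div_nonneg hHbpε hdenp.le
  have hkey : Hb q ≤ ρ * (q + 1 / (1 - ε)) := by
    have h := hmax q ⟨hq0, hq2⟩
    rw [← hρ] at h
    exact (div_le_iff₀ hden).mp h
  have hcmul : (1 - ε) * (1 / (1 - ε)) = 1 := by field_simp
  rw [hsym]
  have hmul : (1 - ε) * (1 + ε) * Hb q ≤ (1 - ε) * (1 + ε) * (ρ * (q + 1 / (1 - ε))) := by
    apply mul_le_mul_of_nonneg_left hkey
    nlinarith
  have hterm : (1 - ε) * (1 + ε) * (ρ * (q + 1 / (1 - ε)))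
      = (1 - ε) * (1 + ε) * ρ * q + (1 + ε) * ρ := by
    field_simp
  rw [hterm] at hmul
  nlinarith [mul_nonneg hρ0 (show (0:ℝ) ≤ (1 - ε) * (1 - 2 * q) by nlinarith)]
end
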